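/- Let G be a topological group. If μ, ν ∈ Meas(rG) are uniform measures, then μ ⋆ ν is a uniform measure; and if μ, ν are positive, then μ ⋆ ν is positive. -/

import Mathlib

noncomputable section

open Filter Topology

/-- `f` is a bounded uniformly continuous real-valued function,
i.e. a member of `Ub(X)`. -/
def IsUb {X : Type*} [UniformSpace X] (f : X → ℝ) : Prop :=
  UniformContinuous f ∧ ∃ C : ℝ, ∀ x, |f x| ≤ C

/-- Supremum norm of a real-valued function. -/
def supNorm {α : Type*} (f : α → ℝ) : ℝ :=
  sSup (Set.range fun x => |f x|)

/-- `μ` is (the restriction to `Ub(X)` of) a norm-continuous linear functional on `Ub(X)`,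
i.e. a member of `Meas(X)`.  It is represented as a bare map on all functions;
only its values on `Ub(X)` are relevant. -/
def IsMeas {X : Type*} [UniformSpace X] (μ : (X → ℝ) → ℝ) : Prop :=
  (∀ f g : X → ℝ, IsUb f → IsUb g → μ (f + g) = μ f + μ g) ∧
  (∀ (c : ℝ) (f : X → ℝ), IsUb f → μ (c • f) = c * μ f) ∧
  (∃ C : ℝ, ∀ f : X → ℝ, IsUb f → (∀ x, |f x| ≤ 1) → |μ f| ≤ C)

/-- The dual norm on `Meas(X)`:  `‖μ‖ = sup {|μ f| : f ∈ Ub(X), ‖f‖ ≤ 1}`. -/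
def measNorm {X : Type*} [UniformSpace X] (μ : (X → ℝ) → ℝ) : ℝ :=
  sSup {r : ℝ | ∃ f : X → ℝ, IsUb f ∧ (∀ x, |f x| ≤ 1) ∧ r = |μ f|}

/-- `μ` is a positive functional:  `μ f ≥ 0` whenever `f ∈ Ub(X)` and `f ≥ 0`. -/
def IsPositive {X : Type*} [UniformSpace X] (μ : (X → ℝ) → ℝ) : Prop :=
  ∀ f : X → ℝ, IsUb f → (∀ x, 0 ≤ f x) → 0 ≤ μ f

/-- `μ` is a *uniform measure*: on every norm-bounded uniformly equicontinuous set
`H ⊆ Ub(X)`, `μ` is continuous for the topology of pointwise convergence. -/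
def IsUniformMeasure {X : Type*} [UniformSpace X] (μ : (X → ℝ) → ℝ) : Prop :=
  ∀ H : Set (X → ℝ),
    (∃ C : ℝ, ∀ f ∈ H, ∀ x, |f x| ≤ C) →
    H.UniformEquicontinuous →
    ∀ f₀ ∈ H, ∀ ε : ℝ, 0 < ε →
      ∃ (K : Finset X) (δ : ℝ), 0 < δ ∧
        ∀ f ∈ H, (∀ x ∈ K, |f x - f₀ x| < δ) → |μ f - μ f₀| < ε

/-- A *semiuniform* function on `X × Y`, i.e. a member of `Ub(X ⋉ Y)` where `X ⋉ Y` is the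
semiuniform product: `f` is bounded, the family of sections `x ↦ f (x, y)` (for `y ∈ Y`)
is uniformly equicontinuous on `X`, and every section `y ↦ f (x, y)` is uniformly
continuous on `Y`. -/
def Semiuniform {X Y : Type*} [UniformSpace X] [UniformSpace Y] (f : X × Y → ℝ) : Prop :=
  (∃ C : ℝ, ∀ p, |f p| ≤ C) ∧
  UniformEquicontinuous (fun y : Y => fun x : X => f (x, y)) ∧
  ∀ x : X, UniformContinuous fun y : Y => f (x, y)

/-- The direct product `μ ⊗ ν`, evaluated at `f : X × Y → ℝ`:
`(μ ⊗ ν)(f) = μ (x ↦ ν (y ↦ f (x, y)))`. -/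
def dirProd {X Y : Type*} (μ : (X → ℝ) → ℝ) (ν : (Y → ℝ) → ℝ) (f : X × Y → ℝ) : ℝ :=
  μ fun x => ν fun y => f (x, y)

/-- Convolution: `(μ ⋆ ν)(f) = μ (x ↦ ν (y ↦ f (x · y)))`. -/
def conv {G : Type*} [Mul G] (μ ν : (G → ℝ) → ℝ) : (G → ℝ) → ℝ :=
  fun f => μ fun x => ν fun y => f (x * y)

/-- The weak-* topology on `Meas(X)`: the topology of pointwise convergence on `Ub(X)`. -/
def weakStarMeas (X : Type*) [UniformSpace X] :
    TopologicalSpace {ν : (X → ℝ) → ℝ // IsMeas ν} :=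
  TopologicalSpace.induced
    (fun ν => fun f : {f : X → ℝ // IsUb f} => ν.1 f.1) Pi.topologicalSpace

/-!
Write `ν_x f = ν (y ↦ f (x, y))`. For a bounded family of functions on `X × Y` which is
uniformly equicontinuous in `x` (uniformly in `y`) and, for each fixed `x`, in `y`, the functions
`x ↦ ν_x f` form again a bounded uniformly equicontinuous family, because `ν` is a bounded
functional. Pointwise continuity of `μ` on that family reduces the continuity of
`f ↦ μ (x ↦ ν_x f)` to finitely many `x`, and pointwise continuity of `ν` on the sections at
each of these `x` reduces it to finitely many points of `X × Y`. In the right uniformity of a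
group, right translations preserve the uniformity and left translations are uniformly
continuous, so `(x, y) ↦ f (x * y)` turns a bounded uniformly equicontinuous family on `G` into
such a family on `G × G`; positivity goes through the same sections.
-/

open Uniformity

section Meas

variable {X Y : Type*} [UniformSpace X] [UniformSpace Y]

lemma IsUb.smul (c : ℝ) {f : X → ℝ} (hf : IsUb f) : IsUb (c • f) := by
  obtain ⟨hfc, C, hC⟩ := hf
  refine ⟨hfc.const_smul c, |c| * C, fun x => ?_⟩
  rw [Pi.smul_apply, smul_eq_mul, abs_mul]
  exact mul_le_mul_of_nonneg_left (hC x) (abs_nonneg c)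

lemma IsUb.sub {f g : X → ℝ} (hf : IsUb f) (hg : IsUb g) : IsUb (f - g) := by
  obtain ⟨hfc, C, hC⟩ := hf
  obtain ⟨hgc, D, hD⟩ := hg
  exact ⟨hfc.sub hgc, C + D, fun x => (abs_sub _ _).trans (add_le_add (hC x) (hD x))⟩

lemma IsMeas.map_sub {μ : (X → ℝ) → ℝ} (hμ : IsMeas μ) {f g : X → ℝ} (hf : IsUb f)
    (hg : IsUb g) : μ (f - g) = μ f - μ g := by
  rw [sub_eq_add_neg, ← neg_one_smul ℝ g, hμ.1 _ _ hf (hg.smul _), hμ.2.1 _ _ hg]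
  ring

lemma IsMeas.exists_bound {μ : (X → ℝ) → ℝ} (hμ : IsMeas μ) :
    ∃ C : ℝ, 0 ≤ C ∧ ∀ f : X → ℝ, IsUb f → ∀ B : ℝ, 0 < B → (∀ x, |f x| ≤ B) →
      |μ f| ≤ C * B := by
  obtain ⟨C, hC⟩ := hμ.2.2
  refine ⟨max C 0, le_max_right _ _, fun f hf B hB hfB => ?_⟩
  have hunit : ∀ x, |(B⁻¹ • f) x| ≤ 1 := fun x => by
    rw [Pi.smul_apply, smul_eq_mul, abs_mul, abs_inv, abs_of_pos hB, inv_mul_le_iff₀ hB, mul_one]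
    exact hfB x
  calc |μ f| = |μ (B • B⁻¹ • f)| := by rw [smul_inv_smul₀ hB.ne']
    _ = B * |μ (B⁻¹ • f)| := by rw [hμ.2.1 _ _ (hf.smul _), abs_mul, abs_of_pos hB]
    _ ≤ B * max C 0 :=
      mul_le_mul_of_nonneg_left ((hC _ (hf.smul _) hunit).trans (le_max_left _ _)) hB.le
    _ = max C 0 * B := mul_comm _ _

lemma IsMeas.uniformEquicontinuous_apply {ι : Type*} {ν : (Y → ℝ) → ℝ} (hν : IsMeas ν)
    {F : ι → X → Y → ℝ} (hUb : ∀ i x, IsUb (F i x))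
    (hF : UniformEquicontinuous fun p : ι × Y => fun x => F p.1 x p.2) :
    UniformEquicontinuous fun i x => ν (F i x) := by
  obtain ⟨C, hC0, hC⟩ := hν.exists_bound
  rw [Metric.uniformEquicontinuous_iff_right] at hF ⊢
  intro ε hε
  have hε' : 0 < ε / (C + 1) := by positivity
  filter_upwards [hF _ hε'] with xy hxy i
  rw [Real.dist_eq, ← hν.map_sub (hUb i xy.1) (hUb i xy.2)]
  calc |ν (F i xy.1 - F i xy.2)| ≤ C * (ε / (C + 1)) :=
        hC _ ((hUb i xy.1).sub (hUb i xy.2)) _ hε' fun y => (hxy (i, y)).le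
    _ < ε := by rw [mul_div_assoc', div_lt_iff₀ (by positivity)]; nlinarith

lemma Semiuniform.isUb_section {f : X × Y → ℝ} (hf : Semiuniform f) (x : X) :
    IsUb fun y => f (x, y) :=
  ⟨hf.2.2 x, hf.1.imp fun _ hC _ => hC _⟩

lemma IsMeas.isUb_apply_section {ν : (Y → ℝ) → ℝ} (hν : IsMeas ν) {f : X × Y → ℝ}
    (hf : Semiuniform f) : IsUb fun x => ν fun y => f (x, y) := by
  obtain ⟨C, -, hC⟩ := hν.exists_bound
  obtain ⟨B, hB⟩ := hf.1
  have hue := hν.uniformEquicontinuous_apply (F := fun (_ : Unit) x y => f (x, y))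
    (fun _ => hf.isUb_section) (hf.2.1.comp Prod.snd)
  exact ⟨hue.uniformContinuous (), C * (|B| + 1), fun x =>
    hC _ (hf.isUb_section x) _ (by positivity) fun y => (hB _).trans (by linarith [le_abs_self B])⟩

lemma IsPositive.dirProd {μ : (X → ℝ) → ℝ} {ν : (Y → ℝ) → ℝ} (hμ : IsPositive μ)
    (hν : IsPositive ν) (hν' : IsMeas ν) {f : X × Y → ℝ} (hf : Semiuniform f)
    (hf0 : ∀ p, 0 ≤ f p) : 0 ≤ dirProd μ ν f :=
  hμ _ (hν'.isUb_apply_section hf) fun x => hν _ (hf.isUb_section x) fun _ => hf0 _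

/-- The family analogue of `Semiuniform`, without the bound. -/
def SemiuniformEquicontinuous {ι : Type*} (F : ι → X × Y → ℝ) : Prop :=
  UniformEquicontinuous (fun p : ι × Y => fun x => F p.1 (x, p.2)) ∧
    ∀ x, UniformEquicontinuous fun i y => F i (x, y)

theorem IsUniformMeasure.dirProd {ι : Type*} {μ : (X → ℝ) → ℝ} {ν : (Y → ℝ) → ℝ}
    (hμ : IsUniformMeasure μ) (hν : IsUniformMeasure ν) (hν' : IsMeas ν)
    {F : ι → X × Y → ℝ} (hFb : ∃ C, ∀ i p, |F i p| ≤ C) (hF : SemiuniformEquicontinuous F)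
    (i₀ : ι) {ε : ℝ} (hε : 0 < ε) :
    ∃ (K : Finset (X × Y)) (δ : ℝ), 0 < δ ∧
      ∀ i, (∀ p ∈ K, |F i p - F i₀ p| < δ) → |dirProd μ ν (F i) - dirProd μ ν (F i₀)| < ε := by
  classical
  obtain ⟨C, hC⟩ := hFb
  obtain ⟨Cν, -, hCν⟩ := hν'.exists_bound
  have hsec : ∀ i x, IsUb fun y => F i (x, y) := fun i x =>
    ⟨(hF.2 x).uniformContinuous i, C, fun _ => hC _ _⟩
  obtain ⟨K', δ', hδ', hK'⟩ := hμ (Set.range fun i x => ν fun y => F i (x, y))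
    ⟨Cν * (|C| + 1), Set.forall_mem_range.2 fun i x => hCν _ (hsec i x) _ (by positivity)
      fun _ => (hC _ _).trans (by linarith [le_abs_self C])⟩
    (uniformEquicontinuous_iff_range.1 (hν'.uniformEquicontinuous_apply hsec hF.1))
    _ ⟨i₀, rfl⟩ ε hε
  have hx : ∀ x, ∃ (Kx : Finset Y) (δx : ℝ), 0 < δx ∧ ∀ i,
      (∀ y ∈ Kx, |F i (x, y) - F i₀ (x, y)| < δx) →
        |ν (fun y => F i (x, y)) - ν (fun y => F i₀ (x, y))| < δ' := fun x => by
    obtain ⟨Kx, δx, hδx, hKx⟩ := hν (Set.range fun i y => F i (x, y))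
      ⟨C, Set.forall_mem_range.2 fun i y => hC _ _⟩ (uniformEquicontinuous_iff_range.1 (hF.2 x))
      _ ⟨i₀, rfl⟩ δ' hδ'
    exact ⟨Kx, δx, hδx, fun i => hKx _ ⟨i, rfl⟩⟩
  choose Kx δx hδx hKx using hx
  have hsmall : ∀ᶠ δ in 𝓝[>] (0 : ℝ), ∀ x ∈ K', δ < δx x :=
    (eventually_all_finset K').2 fun x _ =>
      eventually_nhdsWithin_of_eventually_nhds (eventually_lt_nhds (hδx x))
  obtain ⟨δ, hδ, hδpos⟩ := (hsmall.and self_mem_nhdsWithin).exists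
  refine ⟨K'.biUnion fun x => (Kx x).image (x, ·), δ, hδpos, fun i hi =>
    hK' _ ⟨i, rfl⟩ fun x hx => hKx x i fun y hy => (hi _ ?_).trans (hδ x hx)⟩
  exact Finset.mem_biUnion.2 ⟨x, hx, Finset.mem_image_of_mem _ hy⟩

end Meas

lemma UniformEquicontinuous.comp_uniformContinuous {ι α β γ : Type*} [UniformSpace α]
    [UniformSpace β] [UniformSpace γ] {F : ι → β → α} (hF : UniformEquicontinuous F) {g : γ → β}
    (hg : UniformContinuous g) : UniformEquicontinuous fun i => F i ∘ g :=
  fun U hU => hg.eventually (hF U hU)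

namespace IsRightUniformGroup

variable {G : Type*} [Group G] [UniformSpace G] [IsRightUniformGroup G]

lemma eventually_uniformity_mul_right {p : G × G → Prop} (h : ∀ᶠ xy in 𝓤 G, p xy) :
    ∀ᶠ xy in 𝓤 G, ∀ y, p (xy.1 * y, xy.2 * y) := by
  rw [uniformity_eq_comap_mul_inv_nhds_one] at h ⊢
  obtain ⟨W, hW, hWp⟩ := mem_comap.1 h
  exact mem_comap.2 ⟨W, hW, fun xy hxy y => hWp (by simpa [mul_assoc] using hxy)⟩

lemma uniformContinuous_mul_left (x : G) : UniformContinuous (x * ·) := by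
  have hconj : Tendsto (fun g : G => x * g * x⁻¹) (𝓝 1) (𝓝 1) := by
    simpa using (by fun_prop : Continuous fun g : G => x * g * x⁻¹).tendsto 1
  simp only [UniformContinuous, uniformity_eq_comap_mul_inv_nhds_one, tendsto_comap_iff]
  refine (hconj.comp tendsto_comap).congr fun p => ?_
  simp [mul_assoc]

end IsRightUniformGroup

section RightUniformGroup

variable {G : Type*} [Group G] [UniformSpace G] [IsRightUniformGroup G]

lemma UniformEquicontinuous.semiuniformEquicontinuous_comp_mul {ι : Type*} {F : ι → G → ℝ}
    (hF : UniformEquicontinuous F) :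
    SemiuniformEquicontinuous fun i (p : G × G) => F i (p.1 * p.2) :=
  ⟨fun U hU => (IsRightUniformGroup.eventually_uniformity_mul_right (hF U hU)).mono
      fun _ h p => h p.2 p.1,
    fun x => hF.comp_uniformContinuous (IsRightUniformGroup.uniformContinuous_mul_left x)⟩

lemma IsUb.semiuniform_comp_mul {f : G → ℝ} (hf : IsUb f) :
    Semiuniform fun p : G × G => f (p.1 * p.2) := by
  have h := (uniformEquicontinuous_unique.2 hf.1 :
    UniformEquicontinuous fun _ : Unit => f).semiuniformEquicontinuous_comp_mul
  exact ⟨hf.2.imp fun _ hC _ => hC _, h.1.comp ((), ·), fun x => (h.2 x).uniformContinuous ()⟩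

end RightUniformGroup

theorem stmt13 {G : Type*} [Group G] [TopologicalSpace G] [IsTopologicalGroup G] :
    letI : UniformSpace G := IsTopologicalGroup.rightUniformSpace G
    ∀ μ ν : (G → ℝ) → ℝ, IsMeas μ → IsMeas ν →
      ((IsUniformMeasure μ → IsUniformMeasure ν → IsUniformMeasure (conv μ ν)) ∧
        (IsPositive μ → IsPositive ν → IsPositive (conv μ ν))) := by
  let : UniformSpace G := IsTopologicalGroup.rightUniformSpace G
  have : IsRightUniformGroup G := { uniformity_eq := rfl }
  intro μ ν _ hν
  refine ⟨fun hμu hνu H hHb hH f₀ hf₀ ε hε => ?_, fun hμp hνp f hf hf0 =>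
    hμp.dirProd hνp hν hf.semiuniform_comp_mul fun _ => hf0 _⟩
  classical
  obtain ⟨K, δ, hδ, hK⟩ := hμu.dirProd hνu hν (hHb.imp fun _ hC f _ => hC f f.2 _)
    hH.semiuniformEquicontinuous_comp_mul ⟨f₀, hf₀⟩ hε
  exact ⟨K.image fun p => p.1 * p.2, δ, hδ, fun f hf hclose =>
    hK ⟨f, hf⟩ fun p hp => hclose _ (Finset.mem_image_of_mem _ hp)⟩
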